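/- arXiv:2312.10841 — 3 statements merged into one kernel-verified Lean document; each statement's English description precedes it below -/
import Mathlib

section
/- Let Y be a real m×n matrix with SVD Y = U Σ Vᵀ, and let r ≤ rank(Y). Then the matrix X* = U_[1:r] Σ_[1:r] V_[1:r]ᵀ formed from the r largest singular values and corresponding singular vectors minimizes ‖X − Y‖_F² over all real m×n matrices X of rank at most r (Eckart–Young theorem in Frobenius norm). -/
/-!
Conjugating by the orthogonal factors reduces the claim to `‖Z - S‖_F² ≥ ∑_{j ≥ r} σ_j²` for a
rectangular diagonal `S` and any `Z` of rank at most `r`. The kernel of `Z` has dimension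
`d ≥ n - r`; for an orthonormal basis `u₁, …, u_d` of it, Bessel's inequality applied to the rows
of `Z - S` gives `‖Z - S‖_F² ≥ ∑ₖ ‖(Z - S) uₖ‖² = ∑ₖ ‖S uₖ‖² = ∑_j σ_j² p_j`, where
`p_j = ∑ₖ (uₖ)_j²`. Bessel again gives `0 ≤ p_j ≤ 1`, and `∑_j p_j = d ≥ n - r`; for such weights
the nonincreasing `σ_j²` satisfy `∑_j σ_j² p_j ≥ ∑_{j ≥ r} σ_j²`, with equality for the truncation.
-/

open Matrix

namespace Matrix

section OrthogonalInvariance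

variable {R : Type*} [CommRing R] {l m n o : Type*} [Fintype l] [Fintype m] [Fintype n]
  [Fintype o]

theorem sum_sq_eq_trace_transpose_mul (A : Matrix m n R) :
    ∑ i, ∑ j, A i j ^ 2 = trace (Aᵀ * A) := by
  rw [trace, Finset.sum_comm]
  simp [diag, mul_apply, sq]

theorem sum_sq_transpose_mul_mul [DecidableEq m] [DecidableEq n] {U : Matrix m l R}
    {V : Matrix n o R} (hU : U * Uᵀ = 1) (hV : V * Vᵀ = 1) (A : Matrix m n R) :
    ∑ i, ∑ j, (Uᵀ * A * V) i j ^ 2 = ∑ i, ∑ j, A i j ^ 2 := by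
  simp only [sum_sq_eq_trace_transpose_mul, transpose_mul, transpose_transpose]
  calc trace (Vᵀ * (Aᵀ * U) * (Uᵀ * A * V)) = trace (Vᵀ * (Aᵀ * (U * Uᵀ) * A * V)) := by
        simp only [Matrix.mul_assoc]
    _ = trace (Aᵀ * A * (V * Vᵀ)) := by
        rw [hU, Matrix.mul_one, trace_mul_comm, Matrix.mul_assoc]
    _ = trace (Aᵀ * A) := by rw [hV, Matrix.mul_one]

end OrthogonalInvariance

section OrthogonalColumns

variable {R : Type*} [CommRing R] {m n : Type*} [Fintype m]

theorem transpose_mul_self_eq_diagonal [DecidableEq n] {S : Matrix m n R}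
    (hS : ∀ i j k, j ≠ k → S i j * S i k = 0) :
    Sᵀ * S = diagonal fun j => ∑ i, S i j ^ 2 := by
  ext j k
  rw [mul_apply, diagonal_apply]
  split_ifs with hjk
  · simp [hjk, sq]
  · exact Finset.sum_eq_zero fun i _ => hS i j k hjk

theorem sum_sq_mulVec_of_transpose_mul_self_eq_diagonal [Fintype n] [DecidableEq n]
    {S : Matrix m n R} {δ : n → R} (hS : Sᵀ * S = diagonal δ) (x : n → R) :
    ∑ i, (S *ᵥ x) i ^ 2 = ∑ j, δ j * x j ^ 2 := by
  calc ∑ i, (S *ᵥ x) i ^ 2 = x ⬝ᵥ ((Sᵀ * S) *ᵥ x) := by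
        rw [← mulVec_mulVec, dotProduct_mulVec, vecMul_transpose]
        simp [dotProduct, sq]
    _ = ∑ j, δ j * x j ^ 2 := by
        simp only [hS, dotProduct, mulVec_diagonal]
        exact Finset.sum_congr rfl fun j _ => by ring

end OrthogonalColumns

theorem sum_sq_sub_of_apply_eq_ite {R : Type*} [CommRing R] {m : Type*} [Fintype m] {n r : ℕ}
    {A A' : Matrix m (Fin n) R} (hA' : ∀ i j, A' i j = if (j : ℕ) < r then A i j else 0) :
    ∑ i, ∑ j, (A' - A) i j ^ 2 = ∑ j : Fin n, if r ≤ (j : ℕ) then ∑ i, A i j ^ 2 else 0 := by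
  rw [Finset.sum_comm]
  refine Finset.sum_congr rfl fun j _ => ?_
  by_cases hj : (j : ℕ) < r
  · simp [hA', hj, not_le.mpr hj]
  · simp [hA', hj, not_lt.mp hj]

theorem rank_le_of_forall_le_apply_eq_zero {K : Type*} [Field K] {m : Type*} {n r : ℕ}
    {A : Matrix m (Fin n) K} (hA : ∀ i (j : Fin n), r ≤ (j : ℕ) → A i j = 0) : A.rank ≤ r := by
  classical
  have hAP : A = A * diagonal fun j : Fin n => if (j : ℕ) < r then (1 : K) else 0 := by
    ext i j
    by_cases hj : (j : ℕ) < r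
    · simp [hj]
    · simp [hj, hA i j (not_lt.mp hj)]
  rw [hAP]
  refine (rank_mul_le_right _ _).trans ?_
  rw [rank_diagonal, Fintype.card_subtype]
  simp [Fin.card_filter_val_lt]

theorem rank_add_finrank_ker_toEuclideanLin {𝕜 m n : Type*} [RCLike 𝕜] [Fintype m] [Fintype n]
    [DecidableEq n] (A : Matrix m n 𝕜) :
    A.rank + Module.finrank 𝕜 (LinearMap.ker (toEuclideanLin A)) = Fintype.card n := by
  rw [A.rank_eq_finrank_range_toLin (EuclideanSpace.basisFun m 𝕜).toBasis
    (EuclideanSpace.basisFun n 𝕜).toBasis]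
  exact (LinearMap.finrank_range_add_finrank_ker _).trans finrank_euclideanSpace

end Matrix

namespace Orthonormal

variable {ι m n : Type*} [Fintype ι] [Fintype m] [Fintype n] {u : ι → EuclideanSpace ℝ n}

theorem sum_sum_mulVec_sq_le (hu : Orthonormal ℝ u) (A : Matrix m n ℝ) :
    ∑ k, ∑ i, (A *ᵥ (u k).ofLp) i ^ 2 ≤ ∑ i, ∑ j, A i j ^ 2 := by
  rw [Finset.sum_comm]
  refine Finset.sum_le_sum fun i _ => ?_
  simpa [EuclideanSpace.real_norm_sq_eq, PiLp.inner_apply, mulVec, dotProduct, mul_comm] using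
    hu.sum_inner_products_le (WithLp.toLp 2 (A i)) (s := Finset.univ)

theorem sum_sq_apply_le_one [DecidableEq n] (hu : Orthonormal ℝ u) (j : n) :
    ∑ k, (u k).ofLp j ^ 2 ≤ 1 := by
  simpa [EuclideanSpace.inner_single_right] using
    hu.sum_inner_products_le (EuclideanSpace.single j (1 : ℝ)) (s := Finset.univ)

theorem sum_sum_sq_apply (hu : Orthonormal ℝ u) :
    ∑ j, ∑ k, (u k).ofLp j ^ 2 = Fintype.card ι := by
  rw [Finset.sum_comm]
  simp [← EuclideanSpace.real_norm_sq_eq, hu.1]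

end Orthonormal

open Finset in
theorem Fin.card_filter_le_val (n r : ℕ) : #{j : Fin n | r ≤ (j : ℕ)} = n - r := by
  have := Finset.card_filter_add_card_filter_not (s := Finset.univ) fun j : Fin n => (j : ℕ) < r
  simp only [not_lt, Finset.card_univ, Fintype.card_fin, Fin.card_filter_val_lt] at this
  omega

theorem sum_ite_le_sum_mul_of_antitone {n r : ℕ} {δ p : Fin n → ℝ} (hδ : Antitone δ)
    (hδ₀ : 0 ≤ δ) (hp₀ : 0 ≤ p) (hp₁ : p ≤ 1) (hp : ((n - r : ℕ) : ℝ) ≤ ∑ j, p j) :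
    ∑ j : Fin n, (if r ≤ (j : ℕ) then δ j else 0) ≤ ∑ j, δ j * p j := by
  rcases le_or_gt n r with hnr | hrn
  · have hzero : ∀ j : Fin n, ¬ r ≤ (j : ℕ) := fun j => by omega
    simp only [hzero, if_false, Finset.sum_const_zero]
    exact Finset.sum_nonneg fun j _ => mul_nonneg (hδ₀ j) (hp₀ j)
  set c := δ ⟨r, hrn⟩
  have hpt : ∀ j : Fin n, (if r ≤ (j : ℕ) then δ j else 0) - δ j * p j ≤
      c * ((if r ≤ (j : ℕ) then 1 else 0) - p j) := by
    intro j
    split_ifs with hj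
    · have hδc : δ j ≤ c := hδ (Fin.le_def.mpr hj)
      have hp₁j : 0 ≤ 1 - p j := sub_nonneg.mpr (hp₁ j)
      nlinarith
    · have hcδ : c ≤ δ j := hδ (Fin.le_def.mpr (by simp; omega))
      have hp₀j : 0 ≤ p j := hp₀ j
      nlinarith
  have hsum := Finset.sum_le_sum fun j (_ : j ∈ Finset.univ) => hpt j
  rw [Finset.sum_sub_distrib, ← Finset.mul_sum, Finset.sum_sub_distrib, Finset.sum_boole,
    Fin.card_filter_le_val] at hsum
  have hc : c * (((n - r : ℕ) : ℝ) - ∑ j, p j) ≤ 0 :=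
    mul_nonpos_of_nonneg_of_nonpos (hδ₀ _) (sub_nonpos.mpr hp)
  linarith

theorem sum_ite_le_sum_sq_sub_of_rank_le {m : Type*} [Fintype m] {n r : ℕ}
    {S Z : Matrix m (Fin n) ℝ} {δ : Fin n → ℝ} (hS : Sᵀ * S = diagonal δ) (hδ : Antitone δ)
    (hZ : Z.rank ≤ r) :
    ∑ j : Fin n, (if r ≤ (j : ℕ) then δ j else 0) ≤ ∑ i, ∑ j, (Z - S) i j ^ 2 := by
  have hδ₀ : 0 ≤ δ := fun j => by
    have hδj := congrFun₂ hS j j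
    rw [diagonal_apply_eq, mul_apply] at hδj
    exact hδj ▸ Finset.sum_nonneg fun i _ => mul_self_nonneg (S i j)
  let K := LinearMap.ker (toEuclideanLin Z)
  let b := stdOrthonormalBasis ℝ K
  let u : Fin (Module.finrank ℝ K) → EuclideanSpace ℝ (Fin n) := fun k => b k
  have hu : Orthonormal ℝ u := b.orthonormal.comp_linearIsometry K.subtypeₗᵢ
  have hZu : ∀ k, Z *ᵥ (u k).ofLp = 0 := fun k => congrArg WithLp.ofLp (b k).2
  have hdim : n - r ≤ Module.finrank ℝ K := by
    have := Z.rank_add_finrank_ker_toEuclideanLin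
    rw [Fintype.card_fin] at this
    change _ + Module.finrank ℝ K = n at this
    omega
  calc ∑ j : Fin n, (if r ≤ (j : ℕ) then δ j else 0)
      ≤ ∑ j, δ j * ∑ k, (u k).ofLp j ^ 2 :=
        sum_ite_le_sum_mul_of_antitone hδ hδ₀ (fun j => Finset.sum_nonneg fun k _ => sq_nonneg _)
          hu.sum_sq_apply_le_one
          (by rw [hu.sum_sum_sq_apply, Fintype.card_fin]; exact_mod_cast hdim)
    _ = ∑ k, ∑ i, (S *ᵥ (u k).ofLp) i ^ 2 := by
        simp only [sum_sq_mulVec_of_transpose_mul_self_eq_diagonal hS, Finset.mul_sum]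
        exact Finset.sum_comm
    _ = ∑ k, ∑ i, ((Z - S) *ᵥ (u k).ofLp) i ^ 2 := by
        simp only [sub_mulVec, hZu, zero_sub, Pi.neg_apply, neg_sq]
    _ ≤ ∑ i, ∑ j, (Z - S) i j ^ 2 := hu.sum_sum_mulVec_sq_le (Z - S)

section RectangularDiagonal

variable {m n : ℕ} {σ : ℕ → ℝ} {S : Matrix (Fin m) (Fin n) ℝ}

theorem mul_eq_zero_of_rectangular_diagonal
    (hS : ∀ i j, S i j = if (i : ℕ) = (j : ℕ) then σ i else 0)
    (i : Fin m) (j k : Fin n) (hjk : j ≠ k) : S i j * S i k = 0 := by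
  rw [hS, hS]
  split_ifs with h₁ h₂ <;> first | exact absurd (Fin.ext (h₁.symm.trans h₂)) hjk | simp

theorem sum_sq_col_of_rectangular_diagonal
    (hS : ∀ i j, S i j = if (i : ℕ) = (j : ℕ) then σ i else 0) (j : Fin n) :
    ∑ i, S i j ^ 2 = if (j : ℕ) < m then σ j ^ 2 else 0 := by
  split_ifs with hj
  · rw [Finset.sum_eq_single ⟨j, hj⟩]
    · simp [hS]
    · intro i _ hi
      rw [hS, if_neg fun h => hi (Fin.ext h)]
      simp
    · simp
  · refine Finset.sum_eq_zero fun i _ => ?_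
    rw [hS, if_neg (by omega)]
    simp

theorem antitone_sum_sq_col_of_rectangular_diagonal (hσ₀ : 0 ≤ σ) (hσ : Antitone σ)
    (hS : ∀ i j, S i j = if (i : ℕ) = (j : ℕ) then σ i else 0) :
    Antitone fun j : Fin n => ∑ i, S i j ^ 2 := by
  intro j k hjk
  simp only [sum_sq_col_of_rectangular_diagonal hS]
  split_ifs with hk hj hj
  · exact pow_le_pow_left₀ (hσ₀ k) (hσ hjk) 2
  · exact absurd (lt_of_le_of_lt (Fin.le_def.mp hjk) hk) hj
  · positivity
  · rfl

end RectangularDiagonal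

theorem eckart_young_general {m n : ℕ} (Y : Matrix (Fin m) (Fin n) ℝ)
    (U : Matrix (Fin m) (Fin m) ℝ) (V : Matrix (Fin n) (Fin n) ℝ)
    (σ : ℕ → ℝ)
    (hU : U * U.transpose = 1) (hU' : U.transpose * U = 1)
    (hV : V * V.transpose = 1) (hV' : V.transpose * V = 1)
    (hσ0 : ∀ k, 0 ≤ σ k) (hσanti : ∀ k l, k ≤ l → σ l ≤ σ k)
    (S : Matrix (Fin m) (Fin n) ℝ)
    (hS : ∀ i j, S i j = if (i : ℕ) = (j : ℕ) then σ i else 0)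
    (hY : Y = U * S * V.transpose)
    (r : ℕ)
    (Sr : Matrix (Fin m) (Fin n) ℝ)
    (hSr : ∀ i j, Sr i j = if (i : ℕ) = (j : ℕ) ∧ (i : ℕ) < r then σ i else 0)
    (Xstar : Matrix (Fin m) (Fin n) ℝ) (hX : Xstar = U * Sr * V.transpose) :
    Xstar.rank ≤ r ∧
    ∀ X : Matrix (Fin m) (Fin n) ℝ, X.rank ≤ r →
      (∑ i, ∑ j, (Xstar i j - Y i j) ^ 2) ≤ ∑ i, ∑ j, (X i j - Y i j) ^ 2 := by
  have hSr' : ∀ i j, Sr i j = if (j : ℕ) < r then S i j else 0 := fun i j => by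
    rw [hSr, hS]
    split_ifs <;> first | rfl | omega
  have hconj : ∀ A : Matrix (Fin m) (Fin n) ℝ, Uᵀ * (U * A * Vᵀ) * V = A := fun A => by
    simp only [← Matrix.mul_assoc, hU', Matrix.one_mul]
    rw [Matrix.mul_assoc, hV', Matrix.mul_one]
  have hdist : ∀ X : Matrix (Fin m) (Fin n) ℝ,
      ∑ i, ∑ j, (X i j - Y i j) ^ 2 = ∑ i, ∑ j, (Uᵀ * X * V - S) i j ^ 2 := fun X => by
    rw [← hconj S, ← hY, ← Matrix.sub_mul, ← Matrix.mul_sub, sum_sq_transpose_mul_mul hU hV]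
    rfl
  refine ⟨?_, fun X hXr => ?_⟩
  · rw [hX]
    exact (rank_mul_le_left _ _).trans <| (rank_mul_le_right _ _).trans <|
      rank_le_of_forall_le_apply_eq_zero fun i j hj => by rw [hSr', if_neg (by omega)]
  · rw [hdist, hdist, hX, hconj, sum_sq_sub_of_apply_eq_ite hSr']
    exact sum_ite_le_sum_sq_sub_of_rank_le
      (transpose_mul_self_eq_diagonal (mul_eq_zero_of_rectangular_diagonal hS))
      (antitone_sum_sq_col_of_rectangular_diagonal hσ0 hσanti hS)
      ((rank_mul_le_left _ _).trans ((rank_mul_le_right _ _).trans hXr))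

/-- Eckart–Young theorem (Frobenius norm). Let Y = U S Vᵀ be an SVD of the real
m×n matrix Y, where U, V are orthogonal and S is rectangular diagonal with
nonincreasing nonnegative singular values σ. For r ≤ rank Y, the truncation
X* = U S_r Vᵀ (keeping the r largest singular values) has rank at most r and
minimizes ‖X − Y‖_F² over all m×n matrices X of rank at most r. -/
theorem eckart_young {m n : ℕ} (Y : Matrix (Fin m) (Fin n) ℝ)
    (U : Matrix (Fin m) (Fin m) ℝ) (V : Matrix (Fin n) (Fin n) ℝ)
    (σ : ℕ → ℝ)
    (hU : U * U.transpose = 1) (hU' : U.transpose * U = 1)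
    (hV : V * V.transpose = 1) (hV' : V.transpose * V = 1)
    (hσ0 : ∀ k, 0 ≤ σ k) (hσanti : ∀ k l, k ≤ l → σ l ≤ σ k)
    (S : Matrix (Fin m) (Fin n) ℝ)
    (hS : ∀ i j, S i j = if (i : ℕ) = (j : ℕ) then σ i else 0)
    (hY : Y = U * S * V.transpose)
    (r : ℕ) (hr : r ≤ Y.rank)
    (Sr : Matrix (Fin m) (Fin n) ℝ)
    (hSr : ∀ i j, Sr i j = if (i : ℕ) = (j : ℕ) ∧ (i : ℕ) < r then σ i else 0)
    (Xstar : Matrix (Fin m) (Fin n) ℝ) (hX : Xstar = U * Sr * V.transpose) :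
    Xstar.rank ≤ r ∧
    ∀ X : Matrix (Fin m) (Fin n) ℝ, X.rank ≤ r →
      (∑ i, ∑ j, (Xstar i j - Y i j) ^ 2) ≤ ∑ i, ∑ j, (X i j - Y i j) ^ 2 :=
  eckart_young_general Y U V σ hU hU' hV hV' hσ0 hσanti S hS hY r Sr hSr Xstar hX
end

section
/- Let C_S and C_T be real symmetric positive semidefinite d×d matrices with rank(C_T) ≤ rank(C_S). Then the infimum of ‖AᵀC_S A − C_T‖_F² over all real d×d matrices A equals 0, i.e., there exists A with AᵀC_S A = C_T. -/
open Matrix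

/-- If C_S and C_T are real symmetric PSD d×d matrices with rank C_T ≤ rank C_S,
then there exists A with AᵀC_SA = C_T (so the CORAL objective has infimum 0). -/
theorem exists_coral_transform {d : ℕ} (CS CT : Matrix (Fin d) (Fin d) ℝ)
    (hS : CS.PosSemidef) (hT : CT.PosSemidef) (hrank : CT.rank ≤ CS.rank) :
    ∃ A : Matrix (Fin d) (Fin d) ℝ, A.transpose * CS * A = CT := by
  have hSh := hS.1
  have hTh := hT.1
  set μ := hSh.eigenvalues with hμ
  set ν := hTh.eigenvalues with hν
  have hcard : Fintype.card {i // ν i ≠ 0} ≤ Fintype.card {i // μ i ≠ 0} := by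
    rw [← hTh.rank_eq_card_non_zero_eigs, ← hSh.rank_eq_card_non_zero_eigs]
    exact hrank
  obtain ⟨e⟩ := Function.Embedding.nonempty_of_card_le hcard
  set U := (hSh.eigenvectorUnitary : Matrix (Fin d) (Fin d) ℝ) with hU
  set V := (hTh.eigenvectorUnitary : Matrix (Fin d) (Fin d) ℝ) with hV
  set M : Matrix (Fin d) (Fin d) ℝ := fun j k =>
    if hk : ν k = 0 then 0 else
      if j = (e ⟨k, hk⟩ : Fin d) then Real.sqrt (ν k / μ (e ⟨k, hk⟩)) else 0
    with hM
  have key : Mᵀ * Matrix.diagonal μ * M = Matrix.diagonal ν := by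
    ext k k'
    rw [Matrix.mul_apply]
    simp only [Matrix.mul_diagonal, Matrix.transpose_apply, Matrix.diagonal_apply]
    by_cases hk : ν k = 0
    · simp [hM, hk]
    · by_cases hk' : ν k' = 0
      · rw [if_neg (by rintro rfl; exact hk hk')]
        apply Finset.sum_eq_zero
        intro j _
        simp [hM, hk']
      · by_cases hkk : k = k'
        · subst hkk
          rw [if_pos rfl]
          rw [Finset.sum_eq_single ((e ⟨k, hk⟩ : Fin d))]
          · have hμpos : μ (e ⟨k, hk⟩) ≠ 0 := (e ⟨k, hk⟩).2
            simp only [hM, dif_neg hk, if_pos rfl]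
            simp only [if_true]
            rw [mul_comm, ← mul_assoc,
              Real.mul_self_sqrt (div_nonneg (hT.eigenvalues_nonneg k) (hS.eigenvalues_nonneg _)),
              div_mul_cancel₀ _ hμpos]
          · intro j _ hj
            simp [hM, dif_neg hk, if_neg hj]
          · simp
        · rw [if_neg hkk]
          apply Finset.sum_eq_zero
          intro j _
          simp only [hM, dif_neg hk, dif_neg hk']
          rcases eq_or_ne j (e ⟨k, hk⟩ : Fin d) with h1 | h1
          · rcases eq_or_ne j (e ⟨k', hk'⟩ : Fin d) with h2 | h2
            · exfalso
              apply hkk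
              have : e ⟨k, hk⟩ = e ⟨k', hk'⟩ := Subtype.ext (h1 ▸ h2)
              exact congrArg Subtype.val (e.injective this)
            · rw [if_neg h2, mul_zero]
          · rw [if_neg h1, zero_mul, zero_mul]
  have hUmem := hSh.eigenvectorUnitary.2
  have hVmem := hTh.eigenvectorUnitary.2
  have hU1 : star U * U = 1 := Matrix.mem_unitaryGroup_iff'.mp hUmem
  have hV1 : V * star V = 1 := Matrix.mem_unitaryGroup_iff.mp hVmem
  refine ⟨U * M * star V, ?_⟩
  have hCS : CS = U * Matrix.diagonal μ * star U := by
    have := hSh.spectral_theorem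
    simpa using this
  have hCT : CT = V * Matrix.diagonal ν * star V := by
    have := hTh.spectral_theorem
    simpa using this
  have hstar : ∀ X : Matrix (Fin d) (Fin d) ℝ, star X = Xᵀ := fun X => by
    ext i j; simp [Matrix.star_eq_conjTranspose, Matrix.conjTranspose_apply]
  have htrans : (U * M * star V)ᵀ = V * Mᵀ * star U := by
    rw [hstar V, hstar U, Matrix.transpose_mul, Matrix.transpose_mul, Matrix.transpose_transpose,
      mul_assoc]
  rw [htrans, hCS, hCT, ← key]
  simp only [mul_assoc]
  simp only [show ∀ X : Matrix (Fin d) (Fin d) ℝ, star U * (U * X) = X from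
    fun X => by rw [← mul_assoc, hU1, one_mul]]
end

section
/- For real symmetric positive semidefinite d×d matrices C_S and C_T with eigendecompositions C_S = U_S Σ_S U_Sᵀ and C_T = U_T Σ_T U_Tᵀ, and r = min(rank C_S, rank C_T), the minimum of ‖AᵀC_S A − C_T‖_F² over all real d×d matrices A equals Σ_{k>r} λ_k(C_T)², the sum of squares of the eigenvalues of C_T beyond the r largest. -/
/-!
Conjugating by `U_T` reduces everything to `C_T = diag t`, measured in `‖W‖² = tr (Wᵀ W)`.

Lower bound: `X = U_Tᵀ Aᵀ C_S A U_T` has rank at most `rank C_S`. If `P` is the orthogonal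
projection onto `ker X`, then `‖X - diag t‖² ≥ ‖(X - diag t) P‖² = ‖diag t · P‖² = ∑ t_k² P_kk`,
where the weights `P_kk ∈ [0, 1]` add up to at least `d - rank C_S`. Such a weighted sum of the
decreasing `t_k²` is at least the sum of the last `d - rank C_S` of them.

Attainment: `Σ_S` has `ρ = rank C_S` nonzero entries, so some `B` gives
`Bᵀ Σ_S B = diag (t_0, …, t_{ρ-1}, 0, …, 0)`, and `A = U_S B U_Tᵀ` attains the bound.

Since `t` vanishes from index `rank C_T` on, cutting at `min (rank C_S) (rank C_T)` or at
`rank C_S` gives the same tail.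
-/

open Matrix Finset

section Frobenius

variable {m n : Type*} [Fintype m] [Fintype n] {P : Matrix n n ℝ}

theorem sum_sq_eq_trace_transpose_mul_self (W : Matrix m n ℝ) :
    ∑ i, ∑ j, W i j ^ 2 = trace (Wᵀ * W) := by
  simp only [trace, Matrix.diag, mul_apply, transpose_apply, sq]
  exact Finset.sum_comm

theorem trace_transpose_mul_self_nonneg (W : Matrix m n ℝ) : 0 ≤ trace (Wᵀ * W) := by
  rw [← sum_sq_eq_trace_transpose_mul_self]
  positivity

theorem trace_transpose_mul_self_diagonal [DecidableEq n] (v : n → ℝ) :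
    trace ((diagonal v)ᵀ * diagonal v) = ∑ k, v k ^ 2 := by
  simp [sq]

theorem trace_transpose_mul_self_conj [DecidableEq n] {U : Matrix n n ℝ} (hU : Uᵀ * U = 1)
    (Z : Matrix n n ℝ) : trace ((U * Z * Uᵀ)ᵀ * (U * Z * Uᵀ)) = trace (Zᵀ * Z) := by
  have hconj : (U * Z * Uᵀ)ᵀ * (U * Z * Uᵀ) = U * (Zᵀ * Z) * Uᵀ := by
    simp only [transpose_mul, transpose_transpose, Matrix.mul_assoc]
    rw [← Matrix.mul_assoc Uᵀ U, hU, Matrix.one_mul]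
  rw [hconj, trace_mul_comm, ← Matrix.mul_assoc, hU, Matrix.one_mul]

theorem IsStarProjection.transpose_eq (hP : IsStarProjection P) : Pᵀ = P := by
  rw [← conjTranspose_eq_transpose_of_trivial]
  exact hP.isSelfAdjoint

theorem IsStarProjection.diag_mem_Icc (hP : IsStarProjection P) (k : n) :
    P k k ∈ Set.Icc 0 1 := by
  have hdiag : P k k = ∑ j, P k j ^ 2 := by
    conv_lhs => rw [← hP.isIdempotentElem.eq]
    simp only [mul_apply, sq]
    refine Finset.sum_congr rfl fun j _ => ?_
    rw [← hP.transpose_eq, transpose_apply, hP.transpose_eq]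
  have hsq : P k k ^ 2 ≤ P k k := hdiag ▸ Finset.single_le_sum (f := fun j => P k j ^ 2)
    (fun j _ => sq_nonneg _) (Finset.mem_univ k)
  have hnonneg : 0 ≤ P k k := hdiag ▸ by positivity
  exact ⟨hnonneg, by nlinarith⟩

theorem trace_transpose_mul_self_mul_of_isStarProjection (hP : IsStarProjection P)
    (Y : Matrix m n ℝ) : trace ((Y * P)ᵀ * (Y * P)) = trace (Yᵀ * Y * P) := by
  have hconj : (Y * P)ᵀ * (Y * P) = P * (Yᵀ * Y * P) := by
    simp only [transpose_mul, hP.transpose_eq, Matrix.mul_assoc]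
  rw [hconj, trace_mul_comm, Matrix.mul_assoc, hP.isIdempotentElem.eq]

theorem trace_transpose_mul_self_mul_le_of_isStarProjection [DecidableEq n]
    (hP : IsStarProjection P) (Y : Matrix m n ℝ) :
    trace ((Y * P)ᵀ * (Y * P)) ≤ trace (Yᵀ * Y) := by
  have hsplit : trace (Yᵀ * Y)
      = trace ((Y * P)ᵀ * (Y * P)) + trace ((Y * (1 - P))ᵀ * (Y * (1 - P))) := by
    rw [trace_transpose_mul_self_mul_of_isStarProjection hP,
      trace_transpose_mul_self_mul_of_isStarProjection hP.one_sub, ← trace_add, ← Matrix.mul_add,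
      add_sub_cancel, Matrix.mul_one]
  linarith [trace_transpose_mul_self_nonneg (Y * (1 - P))]

theorem exists_isStarProjection_mul_eq_zero [DecidableEq n] (X : Matrix m n ℝ) :
    ∃ P : Matrix n n ℝ, IsStarProjection P ∧ X * P = 0 ∧ trace P + X.rank = Fintype.card n := by
  set K := LinearMap.ker (toEuclideanLin X)
  let b := stdOrthonormalBasis ℝ K
  set V : Matrix (Fin (Module.finrank ℝ K)) n ℝ := of fun i j => (b i : EuclideanSpace ℝ n) j
  have hVV : V * Vᵀ = 1 := by
    ext i i'
    have h := orthonormal_iff_ite.mp (b.orthonormal.comp_linearIsometry K.subtypeₗᵢ) i' i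
    rw [EuclideanSpace.inner_eq_star_dotProduct] at h
    simp only [V, mul_apply, of_apply, transpose_apply, one_apply, eq_comm (a := i), ← h]
    rfl
  have hXV : X * Vᵀ = 0 := by
    ext a i
    exact congrArg (fun v : EuclideanSpace ℝ m => v a) (LinearMap.mem_ker.mp (b i).2)
  have hrank : Module.finrank ℝ K + X.rank = Fintype.card n := by
    rw [rank_eq_finrank_range_toLin X (PiLp.basisFun 2 ℝ m) (PiLp.basisFun 2 ℝ n),
      ← toLpLin_eq_toLin, add_comm, LinearMap.finrank_range_add_finrank_ker, finrank_euclideanSpace]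
  refine ⟨Vᵀ * V, ⟨?_, ?_⟩, by rw [← Matrix.mul_assoc, hXV, Matrix.zero_mul], ?_⟩
  · rw [IsIdempotentElem, Matrix.mul_assoc, ← Matrix.mul_assoc V, hVV, Matrix.one_mul]
  · rw [IsSelfAdjoint, star_eq_conjTranspose, conjTranspose_eq_transpose_of_trivial, transpose_mul,
      transpose_transpose]
  · rw [trace_mul_comm, hVV, trace_one, Fintype.card_fin]
    exact_mod_cast hrank

end Frobenius

theorem rank_conj_of_transpose_mul_self_eq_one {R n : Type*} [CommRing R] [Fintype n]
    [DecidableEq n] {U : Matrix n n R} (hU : Uᵀ * U = 1) (M : Matrix n n R) :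
    (U * M * Uᵀ).rank = M.rank := by
  rw [rank_mul_eq_left_of_isUnit_det _ _ (isUnit_det_of_right_inverse hU),
    rank_mul_eq_right_of_isUnit_det _ _ (isUnit_det_of_left_inverse hU)]

theorem transpose_mul_conj_mul_conj {R n : Type*} [CommRing R] [Fintype n] [DecidableEq n]
    {U : Matrix n n R} (hU : Uᵀ * U = 1) (B D V : Matrix n n R) :
    (U * B * Vᵀ)ᵀ * (U * D * Uᵀ) * (U * B * Vᵀ) = V * (Bᵀ * D * B) * Vᵀ := by
  simp only [transpose_mul, transpose_transpose, Matrix.mul_assoc]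
  rw [← Matrix.mul_assoc Uᵀ U, hU, Matrix.one_mul, ← Matrix.mul_assoc Uᵀ U, hU, Matrix.one_mul]

theorem sub_conj_eq_conj_sub {R n : Type*} [CommRing R] [Fintype n] [DecidableEq n]
    {U : Matrix n n R} (hU : U * Uᵀ = 1) (M D : Matrix n n R) :
    M - U * D * Uᵀ = U * (Uᵀ * M * U - D) * Uᵀ := by
  simp only [Matrix.mul_sub, Matrix.sub_mul, Matrix.mul_assoc, hU, Matrix.mul_one]
  simp only [← Matrix.mul_assoc, hU, Matrix.one_mul]

theorem card_filter_le_val {d r : ℕ} : #(univ.filter (fun k : Fin d => r ≤ (k : ℕ))) = d - r := by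
  have hlt := Fin.card_filter_val_lt (n := d) (m := r)
  have hsplit := card_filter_add_card_filter_not (s := univ) (fun k : Fin d => (k : ℕ) < r)
  simp only [not_lt, card_univ, Fintype.card_fin] at hsplit
  omega

theorem sum_filter_le_sum_mul {d r : ℕ} {c q : Fin d → ℝ} (hc : ∀ k, 0 ≤ c k)
    (hanti : Antitone c) (hq : ∀ k, q k ∈ Set.Icc 0 1) (hsum : (d : ℝ) ≤ r + ∑ k, q k) :
    ∑ k ∈ univ.filter (fun k : Fin d => r ≤ (k : ℕ)), c k ≤ ∑ k, c k * q k := by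
  -- With the threshold `θ = c r`, summing the nonnegative terms `(c k - θ) * (q k - ind k)`
  -- gives the claim, because `θ ≥ 0` and `∑ q ≥ ∑ ind`.
  set θ := if h : r < d then c ⟨r, h⟩ else 0
  set ind : Fin d → ℝ := fun k => if r ≤ (k : ℕ) then 1 else 0
  have hterm : ∀ k, 0 ≤ (c k - θ) * (q k - ind k) := by
    intro k
    by_cases hk : r ≤ (k : ℕ)
    · have hθ : c k ≤ θ := by
        simp only [θ, dif_pos (hk.trans_lt k.isLt)]
        exact hanti (Fin.le_def.mpr hk)
      simp only [ind, if_pos hk]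
      exact mul_nonneg_of_nonpos_of_nonpos (by linarith) (by linarith [(hq k).2])
    · have hθ : θ ≤ c k := by
        simp only [θ]
        split_ifs with hrd
        · exact hanti (Fin.le_def.mpr (by simp; omega))
        · exact hc k
      simp only [ind, if_neg hk]
      exact mul_nonneg (by linarith) (by linarith [(hq k).1])
  have hθ : θ * ∑ k, ind k ≤ θ * ∑ k, q k := by
    simp only [θ]
    split_ifs with hrd
    · refine mul_le_mul_of_nonneg_left ?_ (hc _)
      simp only [ind, sum_boole, card_filter_le_val, Nat.cast_sub hrd.le]
      linarith
    · simp
  have hind : ∑ k, c k * ind k = ∑ k ∈ univ.filter (fun k : Fin d => r ≤ (k : ℕ)), c k := by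
    simp [ind, sum_filter]
  have hsum_term := sum_nonneg fun k (_ : k ∈ univ) => hterm k
  simp only [sub_mul, mul_sub, sum_sub_distrib, ← mul_sum] at hsum_term
  linarith

theorem sum_sq_tail_le_trace_of_rank_le {d r : ℕ} {t : Fin d → ℝ} (ht : ∀ i, 0 ≤ t i)
    (hanti : Antitone t) {X : Matrix (Fin d) (Fin d) ℝ} (hX : X.rank ≤ r) :
    ∑ k ∈ univ.filter (fun k : Fin d => r ≤ (k : ℕ)), t k ^ 2
      ≤ trace ((X - diagonal t)ᵀ * (X - diagonal t)) := by
  obtain ⟨P, hP, hXP, htr⟩ := exists_isStarProjection_mul_eq_zero X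
  have hweights : (d : ℝ) ≤ r + ∑ i, P i i := by
    have hX' : (X.rank : ℝ) ≤ r := by exact_mod_cast hX
    rw [Fintype.card_fin] at htr
    linarith [show trace P = ∑ i, P i i from rfl]
  calc ∑ i ∈ univ.filter (fun i : Fin d => r ≤ (i : ℕ)), t i ^ 2
      ≤ ∑ i, t i ^ 2 * P i i :=
        sum_filter_le_sum_mul (fun i => sq_nonneg _)
          (fun i j hij => pow_le_pow_left₀ (ht j) (hanti hij) 2) hP.diag_mem_Icc hweights
    _ = trace (((X - diagonal t) * P)ᵀ * ((X - diagonal t) * P)) := by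
        rw [Matrix.sub_mul, hXP, zero_sub, transpose_neg, neg_mul_neg,
          trace_transpose_mul_self_mul_of_isStarProjection hP, diagonal_transpose,
          diagonal_mul_diagonal]
        simp [trace, diagonal_mul, sq]
    _ ≤ trace ((X - diagonal t)ᵀ * (X - diagonal t)) :=
        trace_transpose_mul_self_mul_le_of_isStarProjection hP _

theorem exists_transpose_mul_diagonal_mul_eq_diagonal {n : Type*} [Fintype n] [DecidableEq n]
    {s w : n → ℝ} (hs : ∀ i, 0 ≤ s i) (hw : ∀ k, 0 ≤ w k)
    (hcard : Fintype.card {k // w k ≠ 0} ≤ Fintype.card {i // s i ≠ 0}) :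
    ∃ B : Matrix n n ℝ, Bᵀ * diagonal s * B = diagonal w := by
  obtain ⟨e⟩ := Function.Embedding.nonempty_of_card_le hcard
  -- Off the support of `w`, column `k` of `B` vanishes whatever `g k` is, since `√(0 / x) = 0`.
  set g : n → n := fun k => if h : w k ≠ 0 then (e ⟨k, h⟩ : n) else k
  have hgs : ∀ k, w k ≠ 0 → s (g k) ≠ 0 := fun k h => by
    simpa only [g, dif_pos h] using (e ⟨k, h⟩).2
  have hginj : ∀ k l, w k ≠ 0 → w l ≠ 0 → g k = g l → k = l := fun k l hk hl h => by
    simp only [g, dif_pos hk, dif_pos hl] at h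
    exact congrArg Subtype.val (e.injective (Subtype.ext h))
  set B : Matrix n n ℝ := of fun i k => if i = g k then √(w k / s i) else 0
  refine ⟨B, ?_⟩
  ext k l
  have hentry : (Bᵀ * diagonal s * B) k l
      = if g k = g l then √(w k / s (g k)) * s (g k) * √(w l / s (g k)) else 0 := by
    by_cases h : g k = g l <;> simp [B, mul_apply, h]
  rw [hentry, diagonal_apply]
  by_cases hkl : k = l
  · subst hkl
    by_cases hwk : w k = 0
    · simp [hwk]
    · rw [if_pos rfl, if_pos rfl, mul_right_comm, Real.mul_self_sqrt (div_nonneg (hw k) (hs _)),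
        div_mul_cancel₀ _ (hgs k hwk)]
  · rw [if_neg hkl]
    split_ifs with hg
    · by_cases hwk : w k = 0
      · simp [hwk]
      · by_cases hwl : w l = 0
        · simp [hwl]
        · exact absurd (hginj k l hwk hwl hg) hkl
    · rfl

theorem exists_trace_sq_sub_diagonal_eq_sum_tail {d : ℕ} {s t : Fin d → ℝ}
    (hs : ∀ i, 0 ≤ s i) (ht : ∀ i, 0 ≤ t i) :
    ∃ B : Matrix (Fin d) (Fin d) ℝ,
      trace ((Bᵀ * diagonal s * B - diagonal t)ᵀ * (Bᵀ * diagonal s * B - diagonal t))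
        = ∑ k ∈ univ.filter (fun k : Fin d => Fintype.card {i // s i ≠ 0} ≤ (k : ℕ)), t k ^ 2 := by
  set w : Fin d → ℝ := fun k => if (k : ℕ) < Fintype.card {i // s i ≠ 0} then t k else 0
  have hw : Fintype.card {k // w k ≠ 0} ≤ Fintype.card {i // s i ≠ 0} := by
    rw [Fintype.card_subtype (p := fun k => w k ≠ 0)]
    refine (card_le_card fun k => ?_).trans (Fin.card_filter_val_lt.trans_le (min_le_right _ _))
    simp only [mem_filter, mem_univ, true_and, w]
    exact fun hk => by_contra fun h => hk (if_neg h)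
  obtain ⟨B, hB⟩ := exists_transpose_mul_diagonal_mul_eq_diagonal hs
    (fun k => by simp only [w]; split_ifs <;> simp [ht]) hw
  refine ⟨B, ?_⟩
  rw [hB, diagonal_sub, trace_transpose_mul_self_diagonal, sum_filter]
  refine sum_congr rfl fun k _ => ?_
  simp only [w]
  split_ifs <;> first | omega | ring

theorem eq_zero_of_card_ne_zero_le {d : ℕ} {t : Fin d → ℝ} (ht : ∀ i, 0 ≤ t i)
    (hanti : Antitone t) {k : Fin d} (hk : Fintype.card {i // t i ≠ 0} ≤ k) : t k = 0 := by
  have hcard : Fintype.card {i // t i ≠ 0} = #(univ.filter fun i => 0 < t i) := by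
    rw [Fintype.card_subtype]
    congr 1
    ext i
    simp [(ht i).lt_iff_ne']
  have hk' := (Tuple.lt_card_gt_iff_apply_gt_of_antitone (a := (0 : ℝ)) (j := k) hanti).not.mp
    (by omega)
  linarith [ht k]

theorem sum_filter_min_le_eq {M : Type*} [AddCommMonoid M] {d a b : ℕ} {f : Fin d → M}
    (hf : ∀ k : Fin d, b ≤ (k : ℕ) → f k = 0) :
    ∑ k ∈ univ.filter (fun k : Fin d => min a b ≤ (k : ℕ)), f k
      = ∑ k ∈ univ.filter (fun k : Fin d => a ≤ (k : ℕ)), f k := by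
  refine (sum_subset (fun k => ?_) fun k hk hk' => hf k ?_).symm
  · simp only [mem_filter, mem_univ, true_and]
    omega
  · simp only [mem_filter, mem_univ, true_and] at hk hk'
    omega

theorem coral_min_value_general {d : ℕ}
    (CS CT US UT : Matrix (Fin d) (Fin d) ℝ) (sS t : Fin d → ℝ)
    (hUS' : US.transpose * US = 1)
    (hUT' : UT.transpose * UT = 1)
    (hsS : ∀ i, 0 ≤ sS i) (ht : ∀ i, 0 ≤ t i)
    (htanti : ∀ i j : Fin d, i ≤ j → t j ≤ t i)
    (hCS : CS = US * Matrix.diagonal sS * US.transpose)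
    (hCT : CT = UT * Matrix.diagonal t * UT.transpose)
    (r : ℕ) (hr : r = min CS.rank CT.rank) :
    IsLeast
      (Set.range fun A : Matrix (Fin d) (Fin d) ℝ =>
        ∑ i, ∑ j, ((A.transpose * CS * A - CT) i j) ^ 2)
      (∑ k ∈ Finset.univ.filter (fun k : Fin d => r ≤ (k : ℕ)), (t k) ^ 2) := by
  have hrankS : CS.rank = Fintype.card {i // sS i ≠ 0} := by
    rw [hCS, rank_conj_of_transpose_mul_self_eq_one hUS', rank_diagonal]
  have hrankT : CT.rank = Fintype.card {i // t i ≠ 0} := by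
    rw [hCT, rank_conj_of_transpose_mul_self_eq_one hUT', rank_diagonal]
  rw [hr, sum_filter_min_le_eq fun k hk => by
    rw [eq_zero_of_card_ne_zero_le ht htanti (hrankT ▸ hk), sq, mul_zero]]
  simp only [sum_sq_eq_trace_transpose_mul_self]
  constructor
  · obtain ⟨B, hB⟩ := exists_trace_sq_sub_diagonal_eq_sum_tail hsS ht
    refine ⟨US * B * UTᵀ, ?_⟩
    dsimp only
    rw [hrankS, hCS, hCT, transpose_mul_conj_mul_conj hUS', ← Matrix.sub_mul, ← Matrix.mul_sub,
      trace_transpose_mul_self_conj hUT', hB]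
  · rintro _ ⟨A, rfl⟩
    dsimp only
    rw [hCT, sub_conj_eq_conj_sub (mul_eq_one_comm.mp hUT'), trace_transpose_mul_self_conj hUT']
    refine sum_sq_tail_le_trace_of_rank_le ht htanti ?_
    exact (rank_mul_le_left _ _).trans <| (rank_mul_le_right _ _).trans <|
      (rank_mul_le_left _ _).trans (rank_mul_le_right _ _)

/-- The minimum of ‖AᵀC_SA − C_T‖_F² over all real d×d matrices A equals the
sum of squares of the eigenvalues of C_T beyond the r largest, where
r = min(rank C_S, rank C_T) and the eigenvalues t of C_T are listed in
decreasing order. -/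
theorem coral_min_value {d : ℕ}
    (CS CT US UT : Matrix (Fin d) (Fin d) ℝ) (sS t : Fin d → ℝ)
    (hUS : US * US.transpose = 1) (hUS' : US.transpose * US = 1)
    (hUT : UT * UT.transpose = 1) (hUT' : UT.transpose * UT = 1)
    (hsS : ∀ i, 0 ≤ sS i) (ht : ∀ i, 0 ≤ t i)
    (htanti : ∀ i j : Fin d, i ≤ j → t j ≤ t i)
    (hCS : CS = US * Matrix.diagonal sS * US.transpose)
    (hCT : CT = UT * Matrix.diagonal t * UT.transpose)
    (r : ℕ) (hr : r = min CS.rank CT.rank) :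
    IsLeast
      (Set.range fun A : Matrix (Fin d) (Fin d) ℝ =>
        ∑ i, ∑ j, ((A.transpose * CS * A - CT) i j) ^ 2)
      (∑ k ∈ Finset.univ.filter (fun k : Fin d => r ≤ (k : ℕ)), (t k) ^ 2) :=
  coral_min_value_general CS CT US UT sS t hUS' hUT' hsS ht htanti hCS hCT r hr
end
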